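/- arXiv:1809.09057 — 5 statements merged into one kernel-verified Lean document; each statement's English description precedes it below -/
import Mathlib

section
/- Let L : ℝⁿ×ℝⁿ → ℝ be a reversible strict Tonelli Lagrangian (L(x,v) = L(x,−v) for all (x,v)) and let H(x,p) = sup_{v ∈ ℝⁿ} (⟨p,v⟩ − L(x,v)) be its Hamiltonian. Then inf over u ∈ C^∞(ℝⁿ) of sup_{x ∈ ℝⁿ} H(x, Du(x)) equals sup_{x ∈ ℝⁿ} H(x,0), and this common value equals −inf_{x ∈ ℝⁿ} L(x,0). -/
noncomputable section

open scoped RealInnerProductSpace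

abbrev Euc (n : ℕ) := EuclideanSpace ℝ (Fin n)

/-- A strict Tonelli Lagrangian with constants `C₁ C₂ C₃`:
(a) uniform convexity/boundedness of the second derivative in `v`;
(b) bound on the mixed second derivative `D²_{vx}L`;
(c) bound at `v = 0`. -/
def IsStrictTonelli {n : ℕ} (L : Euc n → Euc n → ℝ) (C₁ C₂ C₃ : ℝ) : Prop :=
  ContDiff ℝ 2 (Function.uncurry L) ∧
  (∀ x v w : Euc n,
      (1 / C₁) * ‖w‖ ^ 2 ≤ iteratedFDeriv ℝ 2 (L x) v ![w, w] ∧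
      iteratedFDeriv ℝ 2 (L x) v ![w, w] ≤ C₁ * ‖w‖ ^ 2) ∧
  (∀ x v : Euc n, ‖fderiv ℝ (fun y => fderiv ℝ (L y) v) x‖ ≤ C₂ * (1 + ‖v‖)) ∧
  (∀ x : Euc n, |L x 0| + ‖fderiv ℝ (fun y => L y 0) x‖ + ‖fderiv ℝ (L x) 0‖ ≤ C₃)

/-- The Hamiltonian associated with a Lagrangian `L`. -/
def hamiltonian {n : ℕ} (L : Euc n → Euc n → ℝ) (x p : Euc n) : ℝ :=
  ⨆ v : Euc n, (⟪p, v⟫ - L x v)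

/-- Strong-convexity lower bound: if `fderiv f 0 = 0` and the second derivative in direction
`v` is at least `a ≥ 0` everywhere, then `f 0 + a/2 ≤ f v`. -/
theorem key_conv {E : Type*} [NormedAddCommGroup E] [NormedSpace ℝ E]
    (f : E → ℝ) (hf : ContDiff ℝ 2 f) (h0 : fderiv ℝ f 0 = 0) (v : E) (a : ℝ) (_ha : 0 ≤ a)
    (hconv : ∀ z : E, a ≤ iteratedFDeriv ℝ 2 f z ![v, v]) :
    f 0 + a / 2 ≤ f v := by
  have hdiff : Differentiable ℝ f := hf.differentiable (by norm_num)
  have hcurve : ∀ t : ℝ, HasDerivAt (fun s : ℝ => s • v) v t := by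
    intro t
    simpa using (hasDerivAt_id t).smul_const v
  set φ' : ℝ → ℝ := fun t => fderiv ℝ f (t • v) v with hφ'def
  have hφ : ∀ t : ℝ, HasDerivAt (fun s : ℝ => f (s • v)) (φ' t) t := by
    intro t
    exact (hdiff (t • v)).hasFDerivAt.comp_hasDerivAt t (hcurve t)
  have hg : ContDiff ℝ 1 (fderiv ℝ f) := hf.fderiv_right (m := 1) le_rfl
  have hφ' : ∀ t : ℝ, HasDerivAt φ' (iteratedFDeriv ℝ 2 f (t • v) ![v, v]) t := by
    intro t
    have h1 : HasDerivAt (fun s : ℝ => fderiv ℝ f (s • v))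
        (fderiv ℝ (fderiv ℝ f) (t • v) v) t :=
      ((hg.differentiable one_ne_zero) (t • v)).hasFDerivAt.comp_hasDerivAt t (hcurve t)
    have h2 := ((ContinuousLinearMap.apply ℝ ℝ v).hasFDerivAt).comp_hasDerivAt t h1
    have h3 : iteratedFDeriv ℝ 2 f (t • v) ![v, v]
        = fderiv ℝ (fderiv ℝ f) (t • v) v v := by
      rw [iteratedFDeriv_two_apply]; simp
    rw [h3]
    exact h2
  have hψmono : Monotone (fun t : ℝ => φ' t - a * t) := by
    have hd : ∀ t : ℝ, HasDerivAt (fun t : ℝ => φ' t - a * t)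
        (iteratedFDeriv ℝ 2 f (t • v) ![v, v] - a) t := by
      intro t
      exact HasDerivAt.sub (hφ' t) (by simpa using (hasDerivAt_id t).const_mul a)
    apply monotone_of_deriv_nonneg (fun t => (hd t).differentiableAt)
    intro t
    rw [(hd t).deriv]
    linarith [hconv (t • v)]
  have hφ'nonneg : ∀ t : ℝ, 0 ≤ t → a * t ≤ φ' t := by
    intro t ht
    have h := hψmono ht
    simp only [mul_zero, sub_zero] at h
    have : φ' 0 = 0 := by simp [hφ'def, h0]
    linarith [h]
  have hχ : ∀ t : ℝ, HasDerivAt (fun t : ℝ => f (t • v) - a * t ^ 2 / 2) (φ' t - a * t) t := by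
    intro t
    have h1 : HasDerivAt (fun t : ℝ => a * t ^ 2 / 2) (a * t) t := by
      have := ((hasDerivAt_pow 2 t).const_mul a).div_const 2
      refine this.congr_deriv ?_
      norm_num
      ring
    exact (hφ t).sub h1
  have hmono : MonotoneOn (fun t : ℝ => f (t • v) - a * t ^ 2 / 2) (Set.Ici 0) := by
    apply monotoneOn_of_deriv_nonneg (convex_Ici 0)
      (Continuous.continuousOn (by
        exact ((hf.continuous.comp (by continuity)).sub (by continuity))))
      (fun t _ => (hχ t).differentiableAt.differentiableWithinAt)
    intro t ht
    rw [(hχ t).deriv]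
    have ht' : (0:ℝ) ≤ t := le_of_lt (by simpa using ht)
    linarith [hφ'nonneg t ht']
  have h01 := hmono (Set.self_mem_Ici) (by norm_num : (1:ℝ) ∈ Set.Ici 0) zero_le_one
  simp only [zero_smul, one_smul, one_pow, mul_one, mul_zero, zero_div] at h01
  linarith

/-- for a reversible strict Tonelli Lagrangian,
`inf_{u ∈ C^∞(ℝⁿ)} sup_{x} H(x, Du(x)) = sup_x H(x,0)`, and this common value equals
`− inf_x L(x,0)`.  The infimum over smooth subsolution bounds is encoded as the infimum of
the set of `r` such that some smooth `u` satisfies `H(x, Du(x)) ≤ r` for all `x`. -/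
theorem stmt6 (n : ℕ) (L : Euc n → Euc n → ℝ) (C₁ C₂ C₃ : ℝ)
    (hC₁ : 0 < C₁) (hC₂ : 0 < C₂) (hC₃ : 0 < C₃)
    (hTon : IsStrictTonelli L C₁ C₂ C₃)
    (hRev : ∀ x v : Euc n, L x v = L x (-v)) :
    sInf {r : ℝ | ∃ u : Euc n → ℝ, ContDiff ℝ (⊤ : ℕ∞) u ∧
        ∀ x : Euc n, hamiltonian L x (gradient u x) ≤ r}
      = (⨆ x : Euc n, hamiltonian L x 0) ∧
    (⨆ x : Euc n, hamiltonian L x 0) = -(⨅ x : Euc n, L x 0) := by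
  obtain ⟨hsm, hconv, hmix, hbd⟩ := hTon
  -- L x is C²
  have hLx : ∀ x : Euc n, ContDiff ℝ 2 (L x) := fun x =>
    hsm.comp (ContDiff.prodMk (contDiff_const (c := x)) contDiff_id)
  -- fderiv (L x) 0 = 0 by reversibility
  have h0 : ∀ x : Euc n, fderiv ℝ (L x) 0 = 0 := by
    intro x
    have hdiff : Differentiable ℝ (L x) := (hLx x).differentiable (by norm_num)
    have hneg : HasFDerivAt (fun v : Euc n => L x (-v))
        ((fderiv ℝ (L x) 0).comp (-(ContinuousLinearMap.id ℝ (Euc n)))) 0 := by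
      have h1 : HasFDerivAt (fun v : Euc n => -v) (-(ContinuousLinearMap.id ℝ (Euc n))) 0 :=
        (hasFDerivAt_id (0 : Euc n)).neg
      have h2 : HasFDerivAt (L x) (fderiv ℝ (L x) 0) (-(0 : Euc n)) := by
        simpa using (hdiff 0).hasFDerivAt
      exact h2.comp 0 h1
    have heq : (fun v : Euc n => L x v) = fun v => L x (-v) := funext (hRev x)
    have hD : fderiv ℝ (L x) 0
        = (fderiv ℝ (L x) 0).comp (-(ContinuousLinearMap.id ℝ (Euc n))) := by
      conv_lhs => rw [show (L x) = fun v => L x (-v) from heq]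
      exact hneg.fderiv
    ext w
    have := congrFun (congrArg (DFunLike.coe) hD) w
    simp only [ContinuousLinearMap.coe_comp', Function.comp_apply,
      ContinuousLinearMap.neg_apply, ContinuousLinearMap.coe_id', id_eq,
      ContinuousLinearMap.map_neg] at this
    have : fderiv ℝ (L x) 0 w = -(fderiv ℝ (L x) 0 w) := this
    simp only [ContinuousLinearMap.zero_apply]
    linarith
  -- strong convexity: L x 0 + ‖v‖²/(2C₁) ≤ L x v
  have hkey : ∀ x v : Euc n, L x 0 + (1 / C₁) * ‖v‖ ^ 2 / 2 ≤ L x v := by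
    intro x v
    exact key_conv (L x) (hLx x) (h0 x) v ((1 / C₁) * ‖v‖ ^ 2)
      (by positivity) (fun z => (hconv x z v).1)
  have hL0min : ∀ x v : Euc n, L x 0 ≤ L x v := by
    intro x v
    have := hkey x v
    have h2 : 0 ≤ (1 / C₁) * ‖v‖ ^ 2 / 2 := by positivity
    linarith
  have hL0bd : ∀ x : Euc n, |L x 0| ≤ C₃ := by
    intro x
    have := hbd x
    have h1 : (0:ℝ) ≤ ‖fderiv ℝ (fun y => L y 0) x‖ := norm_nonneg _
    have h2 : (0:ℝ) ≤ ‖fderiv ℝ (L x) 0‖ := norm_nonneg _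
    linarith
  -- BddAbove of the Hamiltonian's defining family
  have hBdd : ∀ x p : Euc n, BddAbove (Set.range fun v : Euc n => ⟪p, v⟫ - L x v) := by
    intro x p
    refine ⟨C₁ * ‖p‖ ^ 2 / 2 - L x 0, ?_⟩
    rintro r ⟨v, rfl⟩
    have h1 : ⟪p, v⟫ ≤ ‖p‖ * ‖v‖ := real_inner_le_norm p v
    have h2 := hkey x v
    have h3 : ‖p‖ * ‖v‖ - (1 / C₁) * ‖v‖ ^ 2 / 2 ≤ C₁ * ‖p‖ ^ 2 / 2 := by
      have hsq : 0 ≤ (‖v‖ - C₁ * ‖p‖) ^ 2 := sq_nonneg _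
      have h4 : C₁ * (1 / C₁) = 1 := by field_simp
      nlinarith [hsq, hC₁, h4, mul_pos hC₁ hC₁]
    dsimp only
    linarith
  -- hamiltonian L x 0 = -(L x 0)
  have hH0 : ∀ x : Euc n, hamiltonian L x 0 = -(L x 0) := by
    intro x
    unfold hamiltonian
    apply le_antisymm
    · apply ciSup_le
      intro v
      have := hL0min x v
      simp only [inner_zero_left]
      linarith
    · have := le_ciSup (hBdd x 0) (0 : Euc n)
      simpa using this
  -- -(L x 0) ≤ hamiltonian L x p for every p
  have hHge : ∀ x p : Euc n, -(L x 0) ≤ hamiltonian L x p := by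
    intro x p
    have := le_ciSup (hBdd x p) (0 : Euc n)
    simpa [hamiltonian] using this
  have hEuc : Nonempty (Euc n) := ⟨0⟩
  -- bounds for the outer sup/inf
  have hBddSup : BddAbove (Set.range fun x : Euc n => hamiltonian L x 0) := by
    refine ⟨C₃, ?_⟩
    rintro r ⟨x, rfl⟩
    dsimp only
    rw [hH0 x]
    have := abs_le.mp (hL0bd x)
    linarith [this.1]
  have hBddInf : BddBelow (Set.range fun x : Euc n => L x 0) := by
    refine ⟨-C₃, ?_⟩
    rintro r ⟨x, rfl⟩
    have := abs_le.mp (hL0bd x)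
    linarith [this.1]
  set s : ℝ := ⨆ x : Euc n, hamiltonian L x 0 with hs
  constructor
  · -- sInf part
    have hmem : s ∈ {r : ℝ | ∃ u : Euc n → ℝ, ContDiff ℝ (⊤ : ℕ∞) u ∧
        ∀ x : Euc n, hamiltonian L x (gradient u x) ≤ r} := by
      refine ⟨fun _ => 0, contDiff_const, fun x => ?_⟩
      have hgrad : gradient (fun _ : Euc n => (0:ℝ)) x = 0 := gradient_const x 0
      rw [hgrad]
      exact le_ciSup hBddSup x
    have hlb : ∀ r ∈ {r : ℝ | ∃ u : Euc n → ℝ, ContDiff ℝ (⊤ : ℕ∞) u ∧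
        ∀ x : Euc n, hamiltonian L x (gradient u x) ≤ r}, s ≤ r := by
      rintro r ⟨u, _, hu⟩
      apply ciSup_le
      intro x
      rw [hH0 x]
      exact le_trans (hHge x (gradient u x)) (hu x)
    exact le_antisymm (csInf_le ⟨s, fun r hr => hlb r hr⟩ hmem) (le_csInf ⟨s, hmem⟩ hlb)
  · -- sup = -inf part
    have h1 : (⨆ x : Euc n, hamiltonian L x 0) = ⨆ x : Euc n, -(L x 0) := by
      congr 1; funext x; exact hH0 x
    rw [hs, h1]
    have hBddSup' : BddAbove (Set.range fun x : Euc n => -(L x 0)) := by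
      refine ⟨C₃, ?_⟩
      rintro r ⟨x, rfl⟩
      dsimp only
      have := abs_le.mp (hL0bd x)
      linarith [this.1]
    apply le_antisymm
    · apply ciSup_le
      intro x
      have : (⨅ x : Euc n, L x 0) ≤ L x 0 := ciInf_le hBddInf x
      linarith
    · rw [neg_le]
      apply le_ciInf
      intro x
      have : -(L x 0) ≤ ⨆ x : Euc n, -(L x 0) := le_ciSup hBddSup' x
      linarith
end
end

section
/- Let f : ℝⁿ → ℝ be a bounded Borel measurable function with ∫_{ℝⁿ} f(x)² dx < ∞ and ‖f‖₂ > 0, and let G : ℝ → ℝ be differentiable with ν ≤ G'(s) ≤ 1/ν for all s ∈ [−‖f‖_∞, ‖f‖_∞], where ν > 0. For a Borel probability measure m on ℝⁿ define F(x,m) := f(x)·G(∫_{ℝⁿ} f dm). Then for all Borel probability measures m₁, m₂ on ℝⁿ: ∫_{ℝⁿ} (F(x,m₁) − F(x,m₂)) dm₁(x) − ∫_{ℝⁿ} (F(x,m₁) − F(x,m₂)) dm₂(x) ≥ (ν/‖f‖₂²) · ∫_{ℝⁿ} (F(x,m₁) − F(x,m₂))² dx. -/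
noncomputable section

open MeasureTheory

/-- The coupling `F(x,m) = f(x) · G(∫ f dm)`. -/
def coupling {n : ℕ} (f : Euc n → ℝ) (G : ℝ → ℝ) (m : Measure (Euc n)) (x : Euc n) : ℝ :=
  f x * G (∫ y, f y ∂m)

/-!
Write `a = ∫ f dm₁`, `b = ∫ f dm₂` and `g = G a - G b`. Then `F(·,m₁) - F(·,m₂) = g f`, so the
right-hand side is `ν ‖f‖₂⁻² ‖f‖₂² g² = ν g²` and the left-hand side is `(a - b) g`. Both `a` and
`b` lie in `[-‖f‖_∞, ‖f‖_∞]`, where `0 ≤ G' ≤ 1/ν`, and by the mean value theorem such a `G` is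
co-coercive: `g² ≤ ν⁻¹ (a - b) g`.
-/

theorem abs_integral_le_iSup_abs {α : Type*} [MeasurableSpace α] {μ : Measure α}
    [IsProbabilityMeasure μ] {f : α → ℝ} (hf : BddAbove (Set.range fun x => |f x|)) :
    |∫ x, f x ∂μ| ≤ ⨆ x, |f x| := by
  have hbound : ∀ᵐ x ∂μ, ‖f x‖ ≤ ⨆ x, |f x| :=
    Filter.Eventually.of_forall fun x => le_ciSup hf x
  simpa using norm_integral_le_of_norm_le_const hbound

theorem sq_sub_le_mul_mul_sub_of_deriv_mem_Icc {G : ℝ → ℝ} {s : Set ℝ} {L : ℝ}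
    (hG : Differentiable ℝ G) (hs : s.OrdConnected) (hderiv : ∀ c ∈ s, deriv G c ∈ Set.Icc 0 L)
    {a b : ℝ} (ha : a ∈ s) (hb : b ∈ s) :
    (G a - G b) ^ 2 ≤ L * ((a - b) * (G a - G b)) := by
  wlog hab : b < a generalizing a b
  · rcases (not_lt.1 hab).eq_or_lt with rfl | hlt
    · simp
    · convert this hb ha hlt using 1 <;> ring
  obtain ⟨c, hc, hslope⟩ := exists_deriv_eq_slope G hab hG.continuous.continuousOn
    fun x _ => hG.differentiableAt.differentiableWithinAt
  obtain ⟨hd₀, hdL⟩ := hderiv c (hs.out hb ha (Set.Ioo_subset_Icc_self hc))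
  have hG_sub : G a - G b = deriv G c * (a - b) := by
    rw [hslope, div_mul_cancel₀ _ (sub_ne_zero.2 hab.ne')]
  calc (G a - G b) ^ 2 = deriv G c * (deriv G c * (a - b) ^ 2) := by rw [hG_sub]; ring
    _ ≤ L * (deriv G c * (a - b) ^ 2) := by gcongr
    _ = L * ((a - b) * (G a - G b)) := by rw [hG_sub]; ring

theorem coupling_sub_coupling {n : ℕ} (f : Euc n → ℝ) (G : ℝ → ℝ) (m₁ m₂ : Measure (Euc n))
    (x : Euc n) :
    coupling f G m₁ x - coupling f G m₂ x = f x * (G (∫ y, f y ∂m₁) - G (∫ y, f y ∂m₂)) := by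
  simp only [coupling]
  ring

theorem stmt7_general (n : ℕ) (f : Euc n → ℝ) (G : ℝ → ℝ) (ν : ℝ) (hν : 0 < ν)
    (hfbdd : ∃ M : ℝ, ∀ x, |f x| ≤ M)
    (hf2pos : 0 < ∫ x, (f x) ^ 2)
    (hG : Differentiable ℝ G)
    (hG' : ∀ s ∈ Set.Icc (-(⨆ x, |f x|)) (⨆ x, |f x|),
      ν ≤ deriv G s ∧ deriv G s ≤ 1 / ν)
    (m₁ m₂ : Measure (Euc n))
    [IsProbabilityMeasure m₁] [IsProbabilityMeasure m₂] :
    (ν / ∫ x, (f x) ^ 2) * ∫ x, (coupling f G m₁ x - coupling f G m₂ x) ^ 2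
      ≤ (∫ x, (coupling f G m₁ x - coupling f G m₂ x) ∂m₁)
        - ∫ x, (coupling f G m₁ x - coupling f G m₂ x) ∂m₂ := by
  obtain ⟨M, hM⟩ := hfbdd
  have hbdd : BddAbove (Set.range fun x => |f x|) := ⟨M, Set.forall_mem_range.2 hM⟩
  have hco := sq_sub_le_mul_mul_sub_of_deriv_mem_Icc hG Set.ordConnected_Icc
    (fun c hc => ⟨hν.le.trans (hG' c hc).1, (hG' c hc).2⟩)
    (abs_le.1 (abs_integral_le_iSup_abs (μ := m₁) hbdd))
    (abs_le.1 (abs_integral_le_iSup_abs (μ := m₂) hbdd))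
  simp_rw [coupling_sub_coupling, mul_pow, integral_mul_const]
  set g := G (∫ y, f y ∂m₁) - G (∫ y, f y ∂m₂)
  calc (ν / ∫ x, f x ^ 2) * ((∫ x, f x ^ 2) * g ^ 2) = ν * g ^ 2 := by field_simp
    _ ≤ ((∫ y, f y ∂m₁) - ∫ y, f y ∂m₂) * g := by
      rwa [one_div_mul_eq_div, le_div_iff₀' hν] at hco
    _ = _ := by ring

/-- the monotonicity estimate (F3) for couplings `F(x,m) = f(x) G(∫ f dm)`:
`∫ (F(·,m₁) − F(·,m₂)) d(m₁ − m₂) ≥ (ν/‖f‖₂²) ∫ (F(·,m₁) − F(·,m₂))² dx`,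
where `ν ≤ G' ≤ 1/ν` on `[−‖f‖_∞, ‖f‖_∞]` and `‖f‖_∞ = ⨆ x, |f x|`. -/
theorem stmt7 (n : ℕ) (f : Euc n → ℝ) (G : ℝ → ℝ) (ν : ℝ) (hν : 0 < ν)
    (hfmeas : Measurable f) (hfbdd : ∃ M : ℝ, ∀ x, |f x| ≤ M)
    (hf2 : Integrable (fun x => (f x) ^ 2))
    (hf2pos : 0 < ∫ x, (f x) ^ 2)
    (hG : Differentiable ℝ G)
    (hG' : ∀ s ∈ Set.Icc (-(⨆ x, |f x|)) (⨆ x, |f x|),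
      ν ≤ deriv G s ∧ deriv G s ≤ 1 / ν)
    (m₁ m₂ : Measure (Euc n))
    [IsProbabilityMeasure m₁] [IsProbabilityMeasure m₂] :
    (ν / ∫ x, (f x) ^ 2) * ∫ x, (coupling f G m₁ x - coupling f G m₂ x) ^ 2
      ≤ (∫ x, (coupling f G m₁ x - coupling f G m₂ x) ∂m₁)
        - ∫ x, (coupling f G m₁ x - coupling f G m₂ x) ∂m₂ :=
  stmt7_general n f G ν hν hfbdd hf2pos hG hG' m₁ m₂
end
end

section
/- Let f : ℝⁿ → ℝ be a bounded Borel measurable function and let G : ℝ → ℝ be differentiable with G'(s) ≥ ν > 0 for all s ∈ [−‖f‖_∞, ‖f‖_∞]. For a Borel probability measure m on ℝⁿ define F(x,m) := f(x)·G(∫_{ℝⁿ} f dm). If two Borel probability measures m₁, m₂ on ℝⁿ satisfy ∫_{ℝⁿ} (F(x,m₁) − F(x,m₂)) dm₁(x) = ∫_{ℝⁿ} (F(x,m₁) − F(x,m₂)) dm₂(x), then ∫_{ℝⁿ} f dm₁ = ∫_{ℝⁿ} f dm₂, and consequently F(x,m₁) = F(x,m₂) for every x ∈ ℝⁿ. 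-/
noncomputable section

open MeasureTheory

/-- equality case of the monotonicity condition (F3) for couplings
`F(x,m) = f(x) G(∫ f dm)` with `G' ≥ ν > 0` on `[−‖f‖_∞, ‖f‖_∞]`:
if `∫ (F(·,m₁) − F(·,m₂)) dm₁ = ∫ (F(·,m₁) − F(·,m₂)) dm₂`, then `∫ f dm₁ = ∫ f dm₂`
and hence `F(x,m₁) = F(x,m₂)` for every `x`. -/
theorem stmt8 (n : ℕ) (f : Euc n → ℝ) (G : ℝ → ℝ) (ν : ℝ) (hν : 0 < ν)
    (hfmeas : Measurable f) (hfbdd : ∃ M : ℝ, ∀ x, |f x| ≤ M)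
    (hG : Differentiable ℝ G)
    (hG' : ∀ s ∈ Set.Icc (-(⨆ x, |f x|)) (⨆ x, |f x|), ν ≤ deriv G s)
    (m₁ m₂ : Measure (Euc n))
    [IsProbabilityMeasure m₁] [IsProbabilityMeasure m₂]
    (heq : ∫ x, (coupling f G m₁ x - coupling f G m₂ x) ∂m₁
         = ∫ x, (coupling f G m₁ x - coupling f G m₂ x) ∂m₂) :
    (∫ x, f x ∂m₁ = ∫ x, f x ∂m₂) ∧
    ∀ x : Euc n, coupling f G m₁ x = coupling f G m₂ x := by
  obtain ⟨M, hM⟩ := hfbdd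
  set S := ⨆ x, |f x| with hSdef
  have hbdd : BddAbove (Set.range fun x => |f x|) := ⟨M, by rintro _ ⟨x, rfl⟩; exact hM x⟩
  have hS : ∀ x, |f x| ≤ S := fun x => le_ciSup hbdd x
  set a := ∫ x, f x ∂m₁ with ha
  set b := ∫ x, f x ∂m₂ with hb
  -- integrals lie in [-S, S]
  have hint : ∀ (m : Measure (Euc n)) [IsProbabilityMeasure m],
      |∫ x, f x ∂m| ≤ S := by
    intro m _
    have h := norm_integral_le_of_norm_le_const (μ := m) (f := f) (C := S)
      (ae_of_all _ fun x => by simpa using hS x)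
    simpa using h
  have haS : a ∈ Set.Icc (-S) S := by
    have := hint m₁; rw [← ha] at this; exact abs_le.mp this |>.imp id id |> fun h => ⟨h.1, h.2⟩
  have hbS : b ∈ Set.Icc (-S) S := by
    have := hint m₂; rw [← hb] at this; exact ⟨(abs_le.mp this).1, (abs_le.mp this).2⟩
  -- G strictly monotone on [-S, S]
  have hmono : StrictMonoOn G (Set.Icc (-S) S) := by
    apply strictMonoOn_of_deriv_pos (convex_Icc _ _) hG.continuous.continuousOn
    intro s hs
    have : s ∈ Set.Icc (-S) S := interior_subset hs
    exact lt_of_lt_of_le hν (hG' s this)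
  -- rewrite heq
  have hintf : ∀ (m : Measure (Euc n)) [IsProbabilityMeasure m], Integrable f m := by
    intro m _
    exact Integrable.mono' (integrable_const S) hfmeas.aestronglyMeasurable
      (by filter_upwards with x using (by simpa using hS x))
  have key : ∀ (m : Measure (Euc n)) [IsProbabilityMeasure m],
      ∫ x, (coupling f G m₁ x - coupling f G m₂ x) ∂m
        = (∫ x, f x ∂m) * (G a - G b) := by
    intro m _
    simp_rw [coupling, ← mul_sub, ← ha, ← hb]
    exact integral_mul_const _ _
  rw [key m₁, key m₂, ← ha, ← hb] at heq
  have hab : a = b := by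
    by_contra hne
    rcases lt_or_gt_of_ne hne with h | h
    · have hG_lt : G a < G b := hmono haS hbS h
      nlinarith
    · have hG_lt : G b < G a := hmono hbS haS h
      nlinarith
  refine ⟨hab, fun x => ?_⟩
  simp only [coupling, ← ha, ← hb, hab]
end
end

section
/- In the time-dependent variational setting described in the context: for every R ≥ R₀ there exists a constant M_R > 0, depending only on n, the Tonelli constants of L, C_F, R₀, δ₀, c₀, the Lipschitz constant of u^f, and R (in particular independent of T and of the particular coupling c), such that for every starting point x̃ in the closed ball B̄_R and every minimizer ξ* from (0, x̃), the Lebesgue measure of the set {s ∈ [0,T] : ξ*(s) ∈ B̄_R} is at least T − M_R. -/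
/-!
Compare a minimizer `ξ` with the curve that moves smoothly from `x̃` to the well point `x_T`
during `[0, 1]` and rests there afterwards. On `[1, T]` that curve pays exactly the well cost
`L(x_T, 0) + c(s, x_T)`, and on `[0, 1]` it pays at most a constant more: by compactness, `L` is
bounded along all such paths between points of `B̄_R`, and so is `u^f` on `B̄_R`. Conversely,
`L(x, ·)` is convex and even, hence minimal at `v = 0`, so the well condition bounds the running
cost of `ξ` from below by the well cost, plus `δ₀` whenever `ξ` lies outside `K₀`. As `u^f ≥ -c₀`,
minimality of `ξ` bounds `δ₀ · |{s : ξ s ∉ K₀}|` by a constant independent of `T` and `c`, and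
`K₀ ⊆ B̄_R`.
-/

noncomputable section

open MeasureTheory Metric Set
open scoped RealInnerProductSpace NNReal

/-- The action `J_t(ξ) = ∫_t^T (L(ξ(s), ξ'(s)) + c(s, ξ(s))) ds + u^f(ξ(T))` of a
(Lipschitz) curve `ξ`, the derivative being taken almost everywhere. -/
def action {n : ℕ} (L : Euc n → Euc n → ℝ) (c : ℝ → Euc n → ℝ) (uf : Euc n → ℝ)
    (t T : ℝ) (ξ : ℝ → Euc n) : ℝ :=
  (∫ s in t..T, (L (ξ s) (deriv ξ s) + c s (ξ s))) + uf (ξ T)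

/-- `ξ` is a minimizer from `(t,x)`: it is Lipschitz, starts at `x` at time `t`, and its
action on `[t,T]` is no greater than that of any Lipschitz curve starting at `x` at time
`t`. -/
def IsMinimizer {n : ℕ} (L : Euc n → Euc n → ℝ) (c : ℝ → Euc n → ℝ) (uf : Euc n → ℝ)
    (t T : ℝ) (x : Euc n) (ξ : ℝ → Euc n) : Prop :=
  (∃ K : ℝ≥0, LipschitzWith K ξ) ∧ ξ t = x ∧
  ∀ η : ℝ → Euc n, (∃ K : ℝ≥0, LipschitzWith K η) → η t = x →
    action L c uf t T ξ ≤ action L c uf t T η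

/-- The uniform well condition: the point `xT ∈ K₀` minimizes `x ↦ L(x,0) + c(s,x)` over
`K₀` at every time `s ∈ [0,T]`, and beats every point outside `K₀` by at least `δ₀`. -/
def WellCondition {n : ℕ} (L : Euc n → Euc n → ℝ) (c : ℝ → Euc n → ℝ)
    (K₀ : Set (Euc n)) (δ₀ T : ℝ) (xT : Euc n) : Prop :=
  xT ∈ K₀ ∧ ∀ s ∈ Set.Icc (0 : ℝ) T,
    (∀ y ∈ K₀, L xT 0 + c s xT ≤ L y 0 + c s y) ∧
    (∀ y ∉ K₀, L xT 0 + c s xT + δ₀ ≤ L y 0 + c s y)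

theorem ConvexOn.apply_zero_le_of_even {E : Type*} [AddCommGroup E] [Module ℝ E] {f : E → ℝ}
    (hf : ConvexOn ℝ univ f) (heven : ∀ v, f (-v) = f v) (v : E) : f 0 ≤ f v := by
  have hmid := hf.2 (mem_univ v) (mem_univ (-v)) (by norm_num : (0 : ℝ) ≤ 1 / 2)
    (by norm_num : (0 : ℝ) ≤ 1 / 2) (by norm_num)
  rw [smul_neg, add_neg_cancel, heven, smul_eq_mul] at hmid
  linarith

section LineRestriction

variable {E : Type*} [NormedAddCommGroup E] [NormedSpace ℝ E] {f : E → ℝ}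

theorem iteratedDeriv_two_comp_smul (hf : ContDiff ℝ 2 f) (v : E) (t : ℝ) :
    iteratedDeriv 2 (fun t : ℝ => f (t • v)) t = iteratedFDeriv ℝ 2 f (t • v) ![v, v] := by
  have hcomp : (fun t : ℝ => f (t • v)) = f ∘ ContinuousLinearMap.toSpanSingleton ℝ v := rfl
  rw [iteratedDeriv_eq_iteratedFDeriv, hcomp,
    ContinuousLinearMap.iteratedFDeriv_comp_right _ hf _ le_rfl]
  simp only [ContinuousMultilinearMap.compContinuousLinearMap_apply,
    ContinuousLinearMap.toSpanSingleton_apply, one_smul]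
  congr 1
  ext i
  fin_cases i <;> rfl

theorem apply_zero_le_of_even_of_iteratedFDeriv_two_nonneg (hf : ContDiff ℝ 2 f)
    (heven : ∀ v, f (-v) = f v) (hf₂ : ∀ u v, 0 ≤ iteratedFDeriv ℝ 2 f u ![v, v]) (v : E) :
    f 0 ≤ f v := by
  set g : ℝ → ℝ := fun t => f (t • v)
  have hg : ContDiff ℝ 2 g := hf.comp (contDiff_id.smul contDiff_const)
  have hconvex : ConvexOn ℝ univ g := by
    refine convexOn_of_deriv2_nonneg' convex_univ (hg.differentiable (by norm_num)).differentiableOn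
      ((hg.iterate_deriv' 1 1).differentiable one_ne_zero).differentiableOn fun t _ => ?_
    rw [← iteratedDeriv_eq_iterate, iteratedDeriv_two_comp_smul hf]
    exact hf₂ _ _
  simpa [g] using hconvex.apply_zero_le_of_even (fun t => by simp [g, heven]) 1

end LineRestriction

theorem IsStrictTonelli.apply_zero_le {n : ℕ} {L : Euc n → Euc n → ℝ} {C₁ C₂ C₃ : ℝ}
    (hTon : IsStrictTonelli L C₁ C₂ C₃) (hC₁ : 0 < C₁) (hRev : ∀ x v, L x v = L x (-v))
    (x v : Euc n) : L x 0 ≤ L x v :=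
  apply_zero_le_of_even_of_iteratedFDeriv_two_nonneg
    (hTon.1.comp (contDiff_const.prodMk contDiff_id)) (fun v => (hRev x v).symm)
    (fun u w => le_trans (by positivity) (hTon.2.1 x u w).1) v

namespace Real.smoothTransition

theorem hasCompactSupport_deriv : HasCompactSupport (deriv smoothTransition) := by
  refine HasCompactSupport.intro (isCompact_Icc (a := 0) (b := 1)) fun s hs => ?_
  rcases not_and_or.1 hs with hs | hs
  · have hzero : smoothTransition =ᶠ[nhds s] fun _ => 0 :=
      Filter.eventually_of_mem (Iio_mem_nhds (not_le.1 hs)) fun t ht => zero_of_nonpos (le_of_lt ht)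
    rw [hzero.deriv_eq, deriv_const]
  · have hone : smoothTransition =ᶠ[nhds s] fun _ => 1 :=
      Filter.eventually_of_mem (Ioi_mem_nhds (not_le.1 hs)) fun t ht => one_of_one_le (le_of_lt ht)
    rw [hone.deriv_eq, deriv_const]

theorem exists_abs_deriv_le : ∃ C, ∀ s, |deriv smoothTransition s| ≤ C :=
  hasCompactSupport_deriv.exists_bound_of_continuous
    (smoothTransition.contDiff (n := 1)).continuous_deriv_one

end Real.smoothTransition

section TransitionPath

variable {E : Type*} [NormedAddCommGroup E] [NormedSpace ℝ E]

/-- A smooth reparametrisation of the segment `[x, y]`: unlike the affine one, its velocity, and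
hence the running cost along it, is continuous. -/
def transitionPath (x y : E) (s : ℝ) : E := x + Real.smoothTransition s • (y - x)

@[simp]
theorem transitionPath_zero (x y : E) : transitionPath x y 0 = x := by
  simp [transitionPath]

theorem transitionPath_of_one_le (x y : E) {s : ℝ} (hs : 1 ≤ s) : transitionPath x y s = y := by
  simp [transitionPath, Real.smoothTransition.one_of_one_le hs]

theorem hasDerivAt_transitionPath (x y : E) (s : ℝ) :
    HasDerivAt (transitionPath x y) (deriv Real.smoothTransition s • (y - x)) s :=
  ((Real.smoothTransition.contDiff (n := 1)).differentiable one_ne_zero s).hasDerivAt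
    |>.smul_const _ |>.const_add x

theorem continuous_deriv_transitionPath (x y : E) : Continuous (deriv (transitionPath x y)) := by
  rw [funext fun s => (hasDerivAt_transitionPath x y s).deriv]
  exact (Real.smoothTransition.contDiff (n := 1)).continuous_deriv_one.smul continuous_const

theorem deriv_transitionPath_of_one_lt (x y : E) {s : ℝ} (hs : 1 < s) :
    deriv (transitionPath x y) s = 0 := by
  have hconst : transitionPath x y =ᶠ[nhds s] fun _ => y :=
    Filter.eventually_of_mem (Ioi_mem_nhds hs) fun t ht =>
      transitionPath_of_one_le x y (le_of_lt ht)
  rw [hconst.deriv_eq, deriv_const]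

theorem transitionPath_mem {S : Set E} (hS : Convex ℝ S) {x y : E} (hx : x ∈ S) (hy : y ∈ S)
    (s : ℝ) : transitionPath x y s ∈ S :=
  hS.add_smul_sub_mem hx hy
    ⟨Real.smoothTransition.nonneg s, Real.smoothTransition.le_one s⟩

theorem exists_norm_deriv_transitionPath_le :
    ∃ C, 0 ≤ C ∧ ∀ (x y : E) s, ‖deriv (transitionPath x y) s‖ ≤ C * ‖y - x‖ := by
  obtain ⟨C, hC⟩ := Real.smoothTransition.exists_abs_deriv_le
  refine ⟨C, (abs_nonneg _).trans (hC 0), fun x y s => ?_⟩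
  rw [(hasDerivAt_transitionPath x y s).deriv, norm_smul, Real.norm_eq_abs]
  exact mul_le_mul_of_nonneg_right (hC s) (norm_nonneg _)

theorem exists_lipschitzWith_transitionPath (x y : E) :
    ∃ K, LipschitzWith K (transitionPath x y) := by
  obtain ⟨C, -, hC⟩ := exists_norm_deriv_transitionPath_le (E := E)
  refine ⟨(C * ‖y - x‖).toNNReal, lipschitzWith_of_nnnorm_deriv_le
    (fun s => (hasDerivAt_transitionPath x y s).differentiableAt) fun s => ?_⟩
  rw [← NNReal.coe_le_coe, coe_nnnorm]
  exact (hC x y s).trans (Real.le_coe_toNNReal _)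

end TransitionPath

section Lagrangian

variable {E : Type*} [NormedAddCommGroup E] [NormedSpace ℝ E] {L : E → E → ℝ}

theorem exists_lagrangian_transitionPath_sub_le [ProperSpace E]
    (hL : Continuous (Function.uncurry L)) (R : ℝ) :
    ∃ B, ∀ x ∈ closedBall (0 : E) R, ∀ y ∈ closedBall (0 : E) R, ∀ s,
      L (transitionPath x y s) (deriv (transitionPath x y) s) - L y 0 ≤ B := by
  obtain ⟨C, hC₀, hC⟩ := exists_norm_deriv_transitionPath_le (E := E)
  obtain ⟨B, hB⟩ := ((isCompact_closedBall (0 : E) R).prod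
    (isCompact_closedBall (0 : E) (C * (2 * R)))).exists_bound_of_continuousOn hL.continuousOn
  refine ⟨2 * B, fun x hx y hy s => ?_⟩
  rw [mem_closedBall_zero_iff] at hx hy
  have hvel : ‖deriv (transitionPath x y) s‖ ≤ C * (2 * R) :=
    (hC x y s).trans (mul_le_mul_of_nonneg_left
      ((norm_sub_le y x).trans (by linarith)) hC₀)
  have hpath := hB (transitionPath x y s, deriv (transitionPath x y) s)
    ⟨transitionPath_mem (convex_closedBall 0 R) (mem_closedBall_zero_iff.2 hx)
      (mem_closedBall_zero_iff.2 hy) s, mem_closedBall_zero_iff.2 hvel⟩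
  have hrest := hB (y, 0) ⟨mem_closedBall_zero_iff.2 hy,
    mem_closedBall_zero_iff.2 (by rw [norm_zero]; exact (norm_nonneg _).trans hvel)⟩
  simp only [Function.uncurry_apply_pair, Real.norm_eq_abs] at hpath hrest
  linarith [le_abs_self (L (transitionPath x y s) (deriv (transitionPath x y) s)),
    neg_abs_le (L y 0)]

theorem LipschitzWith.intervalIntegrable_lagrangian [ProperSpace E] [MeasurableSpace E]
    [BorelSpace E] (hL : Continuous (Function.uncurry L)) {ξ : ℝ → E} {K : ℝ≥0} (hξ : LipschitzWith K ξ)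
    (a b : ℝ) : IntervalIntegrable (fun s => L (ξ s) (deriv ξ s)) volume a b := by
  obtain ⟨B, hB⟩ := ((isCompact_uIcc.image hξ.continuous).prod
    (isCompact_closedBall (0 : E) K)).exists_bound_of_continuousOn hL.continuousOn
  refine IntegrableOn.intervalIntegrable <| Measure.integrableOn_of_bounded (M := B)
    measure_Icc_lt_top.ne
    (hL.measurable.comp (hξ.continuous.measurable.prodMk (measurable_deriv ξ))).aestronglyMeasurable
    ?_
  refine (ae_restrict_iff' measurableSet_uIcc).2 (Filter.Eventually.of_forall fun s hs => ?_)
  exact hB (ξ s, deriv ξ s)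
    ⟨mem_image_of_mem ξ hs, mem_closedBall_zero_iff.2 (norm_deriv_le_of_lipschitz hξ)⟩

end Lagrangian

section Action

variable {n : ℕ} {L : Euc n → Euc n → ℝ} {c : ℝ → Euc n → ℝ} {uf : Euc n → ℝ} {T : ℝ}

theorem intervalIntegrable_coupling_comp
    (hc : ContinuousOn (fun p : ℝ × Euc n => c p.1 p.2) (Icc 0 T ×ˢ univ))
    {γ : ℝ → Euc n} (hγ : Continuous γ) {a b : ℝ} (ha : a ∈ Icc 0 T) (hb : b ∈ Icc 0 T) :
    IntervalIntegrable (fun s => c s (γ s)) volume a b :=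
  ContinuousOn.intervalIntegrable <| hc.comp (continuousOn_id.prodMk hγ.continuousOn)
    fun _ hs => ⟨uIcc_subset_Icc ha hb hs, mem_univ _⟩

theorem integral_indicator_const_of_subset_Icc {A : Set ℝ} (hA : MeasurableSet A)
    (hAT : A ⊆ Icc 0 T) (hT : 0 ≤ T) (δ : ℝ) :
    ∫ s in (0 : ℝ)..T, A.indicator (fun _ => δ) s = δ * volume.real A := by
  rw [intervalIntegral.integral_of_le hT, ← integral_Icc_eq_integral_Ioc,
    setIntegral_indicator hA, inter_eq_right.2 hAT, setIntegral_const, smul_eq_mul, mul_comm]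

theorem integral_add_mul_volume_excursion_le_action (hL : Continuous (Function.uncurry L))
    (hL₀ : ∀ x v, L x 0 ≤ L x v)
    (hc : ContinuousOn (fun p : ℝ × Euc n => c p.1 p.2) (Icc 0 T ×ˢ univ)) (hT : 0 ≤ T)
    {K₀ : Set (Euc n)} (hK₀ : IsClosed K₀) {δ₀ : ℝ} {xT : Euc n}
    (hwell : WellCondition L c K₀ δ₀ T xT) {ξ : ℝ → Euc n} {K : ℝ≥0} (hξ : LipschitzWith K ξ) :
    (∫ s in (0 : ℝ)..T, (L xT 0 + c s xT)) + δ₀ * volume.real {s ∈ Icc 0 T | ξ s ∉ K₀}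
      + uf (ξ T) ≤ action L c uf 0 T ξ := by
  set A := {s ∈ Icc 0 T | ξ s ∉ K₀}
  have hA : MeasurableSet A :=
    measurableSet_Icc.inter (hK₀.measurableSet.compl.preimage hξ.continuous.measurable)
  have hT₀ : (0 : ℝ) ∈ Icc 0 T := left_mem_Icc.2 hT
  have hTT : T ∈ Icc 0 T := right_mem_Icc.2 hT
  have hpointwise : ∀ s ∈ Icc 0 T, L xT 0 + c s xT + A.indicator (fun _ => δ₀) s ≤
      L (ξ s) (deriv ξ s) + c s (ξ s) := by
    intro s hs
    have hrest := hL₀ (ξ s) (deriv ξ s)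
    by_cases hsK : ξ s ∈ K₀
    · have := (hwell.2 s hs).1 (ξ s) hsK
      rw [indicator_of_notMem fun hsA => hsA.2 hsK]
      linarith
    · have := (hwell.2 s hs).2 (ξ s) hsK
      rw [indicator_of_mem (show s ∈ A from ⟨hs, hsK⟩)]
      linarith
  have hbase : IntervalIntegrable (fun s => L xT 0 + c s xT) volume 0 T :=
    intervalIntegrable_const.add (intervalIntegrable_coupling_comp hc continuous_const hT₀ hTT)
  have hind : IntervalIntegrable (A.indicator fun _ => δ₀) volume 0 T :=
    ((integrableOn_const (s := uIcc 0 T) (C := δ₀) measure_Icc_lt_top.ne).indicator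
      hA).intervalIntegrable
  have hmono := intervalIntegral.integral_mono_on hT (hbase.add hind)
    ((hξ.intervalIntegrable_lagrangian hL 0 T).add
      (intervalIntegrable_coupling_comp hc hξ.continuous hT₀ hTT)) hpointwise
  rw [intervalIntegral.integral_add hbase hind,
    integral_indicator_const_of_subset_Icc hA (sep_subset _ _) hT] at hmono
  unfold action
  linarith

theorem action_transitionPath_le (hL : Continuous (Function.uncurry L))
    (hc : ContinuousOn (fun p : ℝ × Euc n => c p.1 p.2) (Icc 0 T ×ˢ univ)) {C_F : ℝ}
    (hcF : ∀ s ∈ Icc (0 : ℝ) T, ∀ x, |c s x| ≤ C_F) (hT : 1 ≤ T) {x y : Euc n} {B : ℝ}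
    (hB : ∀ s, L (transitionPath x y s) (deriv (transitionPath x y) s) - L y 0 ≤ B) :
    action L c uf 0 T (transitionPath x y)
      ≤ (∫ s in (0 : ℝ)..T, (L y 0 + c s y)) + (B + 2 * C_F) + uf y := by
  set γ := transitionPath x y
  set D : ℝ → ℝ := fun s => (L (γ s) (deriv γ s) + c s (γ s)) - (L y 0 + c s y)
  have hT₀ : (0 : ℝ) ∈ Icc 0 T := ⟨le_rfl, by linarith⟩
  have hTT : T ∈ Icc 0 T := ⟨by linarith, le_rfl⟩
  have hγ : Continuous γ := continuous_iff_continuousAt.2 fun s =>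
    (hasDerivAt_transitionPath x y s).continuousAt
  have hcost : IntervalIntegrable (fun s => L (γ s) (deriv γ s) + c s (γ s)) volume 0 T :=
    (hL.comp (hγ.prodMk (continuous_deriv_transitionPath x y))).intervalIntegrable 0 T |>.add
      (intervalIntegrable_coupling_comp hc hγ hT₀ hTT)
  have hbase : IntervalIntegrable (fun s => L y 0 + c s y) volume 0 T :=
    intervalIntegrable_const.add (intervalIntegrable_coupling_comp hc continuous_const hT₀ hTT)
  have hD : IntervalIntegrable D volume 0 T := hcost.sub hbase
  have hsub : ∀ a b : ℝ, a ∈ Icc 0 T → b ∈ Icc 0 T → IntervalIntegrable D volume a b :=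
    fun a b ha hb => hD.mono_set (uIcc_subset_uIcc (by rwa [uIcc_of_le (by linarith)])
      (by rwa [uIcc_of_le (by linarith)]))
  have hone : (1 : ℝ) ∈ Icc 0 T := ⟨zero_le_one, hT⟩
  have hlate : ∫ s in (1 : ℝ)..T, D s = 0 := by
    rw [← intervalIntegral.integral_zero (a := (1 : ℝ)) (b := T) (μ := volume)]
    refine intervalIntegral.integral_congr_ae (Filter.Eventually.of_forall fun s hs => ?_)
    rw [uIoc_of_le hT] at hs
    simp [D, γ, transitionPath_of_one_le x y hs.1.le, deriv_transitionPath_of_one_lt x y hs.1]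
  have hearly : ∫ s in (0 : ℝ)..1, D s ≤ B + 2 * C_F := by
    have hle : ∀ s ∈ Icc (0 : ℝ) 1, D s ≤ B + 2 * C_F := fun s hs => by
      have hsT : s ∈ Icc 0 T := ⟨hs.1, hs.2.trans hT⟩
      have h₁ := (abs_le.1 (hcF s hsT (γ s))).2
      have h₂ := (abs_le.1 (hcF s hsT y)).1
      have h₃ := hB s
      simp only [D]
      linarith
    simpa using intervalIntegral.integral_mono_on zero_le_one (hsub 0 1 hT₀ hone)
      intervalIntegrable_const hle
  have hsplit := intervalIntegral.integral_add_adjacent_intervals (hsub 0 1 hT₀ hone)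
    (hsub 1 T hone hTT)
  rw [intervalIntegral.integral_sub hcost hbase] at hsplit
  unfold action
  rw [show γ T = y from transitionPath_of_one_le x y hT]
  linarith

end Action

theorem ofReal_sub_le_volume_of_Icc_subset_union {T M : ℝ} {S A : Set ℝ} (hM : 0 ≤ M)
    (hAT : A ⊆ Icc 0 T) (hcover : Icc 0 T ⊆ S ∪ A) (hA : volume.real A ≤ M) :
    ENNReal.ofReal (T - M) ≤ volume S := by
  have hAfin : volume A ≠ ⊤ := ne_top_of_le_ne_top measure_Icc_lt_top.ne (measure_mono hAT)
  rw [ENNReal.ofReal_sub _ hM, tsub_le_iff_right]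
  calc ENNReal.ofReal T = volume (Icc 0 T) := by rw [Real.volume_Icc, sub_zero]
    _ ≤ volume S + volume A := (measure_mono hcover).trans (measure_union_le S A)
    _ ≤ volume S + ENNReal.ofReal M := by
      gcongr
      rw [← ofReal_measureReal hAfin]
      exact ENNReal.ofReal_le_ofReal hA

theorem stmt9_general (n : ℕ) (L : Euc n → Euc n → ℝ) (C₁ C₂ C₃ : ℝ)
    (hC₁ : 0 < C₁)
    (hTon : IsStrictTonelli L C₁ C₂ C₃)
    (hRev : ∀ x v : Euc n, L x v = L x (-v))
    (C_F : ℝ)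
    (K₀ : Set (Euc n)) (hK₀c : IsCompact K₀)
    (R₀ : ℝ) (hK₀R₀ : K₀ ⊆ closedBall 0 R₀)
    (δ₀ : ℝ) (hδ₀ : 0 < δ₀)
    (uf : Euc n → ℝ) (Kf : ℝ≥0) (huf : LipschitzWith Kf uf)
    (c₀ : ℝ) (hufge : ∀ x, -c₀ ≤ uf x)
    (R : ℝ) (hR : R₀ ≤ R) :
    ∃ M > (0 : ℝ), ∀ T : ℝ, 1 < T → ∀ c : ℝ → Euc n → ℝ,
      ContinuousOn (fun p : ℝ × Euc n => c p.1 p.2) (Set.Icc 0 T ×ˢ Set.univ) →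
      (∀ s ∈ Set.Icc (0 : ℝ) T, ∀ x, |c s x| ≤ C_F) →
      (∃ xT : Euc n, WellCondition L c K₀ δ₀ T xT) →
      ∀ xinit ∈ closedBall (0 : Euc n) R, ∀ ξ : ℝ → Euc n,
        IsMinimizer L c uf 0 T xinit ξ →
        ENNReal.ofReal (T - M)
          ≤ volume {s ∈ Set.Icc (0 : ℝ) T | ξ s ∈ closedBall (0 : Euc n) R} := by
  have hL : Continuous (Function.uncurry L) := hTon.1.continuous
  obtain ⟨B, hB⟩ := exists_lagrangian_transitionPath_sub_le hL R
  obtain ⟨U, hU⟩ := (isCompact_closedBall (0 : Euc n) R).exists_bound_of_continuousOn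
    huf.continuous.continuousOn
  set N := B + 2 * C_F + U + c₀
  refine ⟨max (N / δ₀) 1, lt_max_of_lt_right one_pos, fun T hT c hc hcF ⟨xT, hwell⟩ xinit hxinit
    ξ ⟨⟨K, hξ⟩, hξ₀, hmin⟩ => ?_⟩
  have hxT : xT ∈ closedBall 0 R := closedBall_subset_closedBall hR (hK₀R₀ hwell.1)
  have hlow := integral_add_mul_volume_excursion_le_action (uf := uf) hL
    (hTon.apply_zero_le hC₁ hRev) hc (by linarith) hK₀c.isClosed hwell hξ
  have hup := action_transitionPath_le (uf := uf) hL hc hcF hT.le (hB xinit hxinit xT hxT)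
  obtain ⟨Kγ, hγ⟩ := exists_lipschitzWith_transitionPath xinit xT
  have hcmp := hmin _ ⟨Kγ, hγ⟩ (hξ₀ ▸ transitionPath_zero xinit xT)
  have hexcursion : volume.real {s ∈ Icc 0 T | ξ s ∉ K₀} ≤ N / δ₀ := by
    rw [le_div_iff₀ hδ₀]
    linarith [hufge (ξ T), (abs_le.1 (hU xT hxT)).2]
  refine ofReal_sub_le_volume_of_Icc_subset_union (zero_le_one.trans (le_max_right _ _))
    (sep_subset _ _) (fun s hs => ?_) (hexcursion.trans (le_max_left _ _))
  by_cases hsK : ξ s ∈ K₀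
  · exact Or.inl ⟨hs, closedBall_subset_closedBall hR (hK₀R₀ hsK)⟩
  · exact Or.inr ⟨hs, hsK⟩

/-- excursion time from a compact set: in the time-dependent variational
setting, for every `R ≥ R₀` there is `M_R > 0`, independent of the horizon `T > 1` and of
the coupling `c` (with `|c| ≤ C_F` and satisfying the uniform well condition), such that
every minimizer `ξ*` from `(0, xinit)` with `xinit ∈ B̄_R` spends time at least `T − M_R` in
`B̄_R`. -/
theorem stmt9 (n : ℕ) (hn : 1 ≤ n) (L : Euc n → Euc n → ℝ) (C₁ C₂ C₃ : ℝ)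
    (hC₁ : 0 < C₁) (hC₂ : 0 < C₂) (hC₃ : 0 < C₃)
    (hTon : IsStrictTonelli L C₁ C₂ C₃)
    (hRev : ∀ x v : Euc n, L x v = L x (-v))
    (C_F : ℝ) (hCF : 0 ≤ C_F)
    (K₀ : Set (Euc n)) (hK₀c : IsCompact K₀) (hK₀ne : K₀.Nonempty)
    (R₀ : ℝ) (hR₀ : 0 < R₀) (hK₀R₀ : K₀ ⊆ closedBall 0 R₀)
    (δ₀ : ℝ) (hδ₀ : 0 < δ₀)
    (uf : Euc n → ℝ) (Kf : ℝ≥0) (huf : LipschitzWith Kf uf)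
    (c₀ : ℝ) (hc₀ : 0 ≤ c₀) (hufge : ∀ x, -c₀ ≤ uf x)
    (R : ℝ) (hR : R₀ ≤ R) :
    ∃ M > (0 : ℝ), ∀ T : ℝ, 1 < T → ∀ c : ℝ → Euc n → ℝ,
      ContinuousOn (fun p : ℝ × Euc n => c p.1 p.2) (Set.Icc 0 T ×ˢ Set.univ) →
      (∀ s ∈ Set.Icc (0 : ℝ) T, ∀ x, |c s x| ≤ C_F) →
      (∃ xT : Euc n, WellCondition L c K₀ δ₀ T xT) →
      ∀ xinit ∈ closedBall (0 : Euc n) R, ∀ ξ : ℝ → Euc n,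
        IsMinimizer L c uf 0 T xinit ξ →
        ENNReal.ofReal (T - M)
          ≤ volume {s ∈ Set.Icc (0 : ℝ) T | ξ s ∈ closedBall (0 : Euc n) R} :=
  stmt9_general n L C₁ C₂ C₃ hC₁ hTon hRev C_F K₀ hK₀c R₀ hK₀R₀ δ₀ hδ₀ uf Kf huf c₀ hufge R hR
end
end

section
/- In the time-dependent variational setting described in the context: for every R ≥ R₀ there exists a constant κ(R) > 0, depending only on n, the Tonelli constants of L, C_F, R₀, δ₀, c₀, the Lipschitz constant of u^f, sup_{K₀}|u^f|, and R (in particular independent of T and of the particular coupling c), such that for every t ∈ [0,T], every x ∈ B̄_R, and every minimizer ξ* from (t,x): ∫_t^{min(t+1,T)} |ξ*'(s)|² ds ≤ κ(R). -/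
/-!
Taylor's formula, uniform convexity in `v` and reversibility give
`L(x,0) + |v|²/(2C₁) ≤ L(x,v) ≤ L(x,0) + C₁|v|²/2`. By the well condition, the running cost
`L(ξ,ξ') + c(s,ξ)` of any curve then exceeds the cost of resting at `x_T` by at least
`|ξ'|²/(2C₁)`. Compare the minimizer with the curve that moves from `x` to `x_T` at constant speed
during one unit of time and then rests at `x_T`: its running cost exceeds the resting cost by at
most `2(C₃ + C_F) + C₁|x - x_T|²/2` in total, and its endpoint stays in `B̄_R`, where `u^f` is
bounded. As `u^f ≥ -c₀`, this bounds the energy of the minimizer on all of `[t,T]` independently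
of `T` and `c`.
-/

noncomputable section

open MeasureTheory Metric Set
open scoped RealInnerProductSpace NNReal

open scoped Interval

section Taylor

theorem add_deriv_add_half_le_of_le_deriv2 {φ φ' φ'' : ℝ → ℝ} {m : ℝ}
    (hφ : ∀ τ, HasDerivAt φ (φ' τ) τ) (hφ' : ∀ τ, HasDerivAt φ' (φ'' τ) τ)
    (hm : ∀ τ, m ≤ φ'' τ) : φ 0 + φ' 0 + m / 2 ≤ φ 1 := by
  have hslope : ∀ τ, 0 ≤ τ → m * τ ≤ φ' τ - φ' 0 := fun τ hτ => by
    simpa using mul_sub_le_image_sub_of_le_deriv (fun σ => (hφ' σ).differentiableAt)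
      (fun σ => (hφ' σ).deriv ▸ hm σ) hτ
  set ψ : ℝ → ℝ := fun τ => φ τ - φ' 0 * τ - m / 2 * τ ^ 2
  have hψ : ∀ τ, HasDerivAt ψ (φ' τ - φ' 0 - m * τ) τ := fun τ => by
    refine (((hφ τ).sub ((hasDerivAt_id τ).const_mul (φ' 0))).sub
      ((hasDerivAt_pow 2 τ).const_mul (m / 2))).congr_deriv ?_
    simp only [Nat.cast_ofNat]; ring
  have := (convex_Ici (0 : ℝ)).mul_sub_le_image_sub_of_le_deriv (C := 0)
    (fun τ _ => (hψ τ).continuousAt.continuousWithinAt)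
    (fun τ _ => (hψ τ).differentiableAt.differentiableWithinAt)
    (fun τ hτ => by
      rw [interior_Ici] at hτ
      rw [(hψ τ).deriv]; linarith [hslope τ (le_of_lt hτ)])
    0 self_mem_Ici 1 (mem_Ici.2 zero_le_one) zero_le_one
  simp only [ψ] at this; linarith

theorem le_add_deriv_add_half_of_deriv2_le {φ φ' φ'' : ℝ → ℝ} {M : ℝ}
    (hφ : ∀ τ, HasDerivAt φ (φ' τ) τ) (hφ' : ∀ τ, HasDerivAt φ' (φ'' τ) τ)
    (hM : ∀ τ, φ'' τ ≤ M) : φ 1 ≤ φ 0 + φ' 0 + M / 2 := by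
  have := add_deriv_add_half_le_of_le_deriv2 (fun τ => (hφ τ).neg) (fun τ => (hφ' τ).neg)
    (m := -M) (fun τ => neg_le_neg (hM τ))
  simp only [Pi.neg_apply] at this
  linarith

variable {E : Type*} [NormedAddCommGroup E] [NormedSpace ℝ E] {g : E → ℝ}

theorem hasDerivAt_add_smul (x v : E) (τ : ℝ) : HasDerivAt (fun τ : ℝ => x + τ • v) v τ := by
  simpa using ((hasDerivAt_id τ).smul_const v).const_add x

theorem ContDiff.hasDerivAt_comp_add_smul (hg : ContDiff ℝ 2 g) (x v : E) (τ : ℝ) :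
    HasDerivAt (fun τ : ℝ => g (x + τ • v)) (fderiv ℝ g (x + τ • v) v) τ :=
  ((hg.differentiable two_ne_zero) _).hasFDerivAt.comp_hasDerivAt τ (hasDerivAt_add_smul x v τ)

theorem ContDiff.hasDerivAt_fderiv_comp_add_smul (hg : ContDiff ℝ 2 g) (x v : E) (τ : ℝ) :
    HasDerivAt (fun τ : ℝ => fderiv ℝ g (x + τ • v) v)
      (iteratedFDeriv ℝ 2 g (x + τ • v) ![v, v]) τ := by
  have hDg : Differentiable ℝ (fderiv ℝ g) :=
    (hg.fderiv_right (le_refl 2)).differentiable one_ne_zero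
  rw [iteratedFDeriv_two_apply]
  simpa using ((hDg _).hasFDerivAt.comp_hasDerivAt τ (hasDerivAt_add_smul x v τ)).clm_apply
    (hasDerivAt_const τ v)

theorem ContDiff.le_apply_add_of_le_iteratedFDeriv_two (hg : ContDiff ℝ 2 g) {a : ℝ}
    (ha : ∀ y w, a * ‖w‖ ^ 2 ≤ iteratedFDeriv ℝ 2 g y ![w, w]) (x v : E) :
    g x + fderiv ℝ g x v + a * ‖v‖ ^ 2 / 2 ≤ g (x + v) := by
  simpa using add_deriv_add_half_le_of_le_deriv2 (hg.hasDerivAt_comp_add_smul x v)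
    (hg.hasDerivAt_fderiv_comp_add_smul x v) (fun τ => ha (x + τ • v) v)

theorem ContDiff.apply_add_le_of_iteratedFDeriv_two_le (hg : ContDiff ℝ 2 g) {b : ℝ}
    (hb : ∀ y w, iteratedFDeriv ℝ 2 g y ![w, w] ≤ b * ‖w‖ ^ 2) (x v : E) :
    g (x + v) ≤ g x + fderiv ℝ g x v + b * ‖v‖ ^ 2 / 2 := by
  simpa using le_add_deriv_add_half_of_deriv2_le (hg.hasDerivAt_comp_add_smul x v)
    (hg.hasDerivAt_fderiv_comp_add_smul x v) (fun τ => hb (x + τ • v) v)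

end Taylor

section Tonelli

variable {n : ℕ} {L : Euc n → Euc n → ℝ} {C₁ C₂ C₃ : ℝ}

theorem IsStrictTonelli.contDiff_apply (hTon : IsStrictTonelli L C₁ C₂ C₃) (x : Euc n) :
    ContDiff ℝ 2 (L x) :=
  hTon.1.comp (contDiff_const.prodMk contDiff_id)

theorem IsStrictTonelli.abs_apply_zero_le (hTon : IsStrictTonelli L C₁ C₂ C₃) (x : Euc n) :
    |L x 0| ≤ C₃ := by
  linarith [hTon.2.2.2 x, norm_nonneg (fderiv ℝ (fun y => L y 0) x),
    norm_nonneg (fderiv ℝ (L x) 0)]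

-- Adding the Taylor bounds at `v` and `-v` cancels the first-order terms.
theorem IsStrictTonelli.le_apply (hTon : IsStrictTonelli L C₁ C₂ C₃)
    (hRev : ∀ x v : Euc n, L x v = L x (-v)) (x v : Euc n) :
    L x 0 + 1 / C₁ * ‖v‖ ^ 2 / 2 ≤ L x v := by
  have hlow := (hTon.contDiff_apply x).le_apply_add_of_le_iteratedFDeriv_two
    (fun y w => (hTon.2.1 x y w).1) 0
  have hv := hlow v
  have hnv := hlow (-v)
  simp only [zero_add, map_neg, norm_neg, ← hRev] at hv hnv
  linarith

theorem IsStrictTonelli.apply_le (hTon : IsStrictTonelli L C₁ C₂ C₃)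
    (hRev : ∀ x v : Euc n, L x v = L x (-v)) (x v : Euc n) :
    L x v ≤ L x 0 + C₁ * ‖v‖ ^ 2 / 2 := by
  have hup := (hTon.contDiff_apply x).apply_add_le_of_iteratedFDeriv_two_le
    (fun y w => (hTon.2.1 x y w).2) 0
  have hv := hup v
  have hnv := hup (-v)
  simp only [zero_add, map_neg, norm_neg, ← hRev] at hv hnv
  linarith

theorem IsStrictTonelli.abs_apply_le (hTon : IsStrictTonelli L C₁ C₂ C₃) (hC₁ : 0 < C₁)
    (hRev : ∀ x v : Euc n, L x v = L x (-v)) (x v : Euc n) :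
    |L x v| ≤ C₃ + C₁ * ‖v‖ ^ 2 / 2 := by
  have h0 := abs_le.1 (hTon.abs_apply_zero_le x)
  have hlow := hTon.le_apply hRev x v
  have hup := hTon.apply_le hRev x v
  have : 0 ≤ 1 / C₁ * ‖v‖ ^ 2 / 2 := by positivity
  exact abs_le.2 ⟨by linarith, by linarith⟩

end Tonelli

theorem intervalIntegral_le_add_of_eqOn_Ioc {f g : ℝ → ℝ} {t T K : ℝ} (htT : t ≤ T)
    (hK : 0 ≤ K) (hf : IntervalIntegrable f volume t T) (hg : IntervalIntegrable g volume t T)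
    (hle : ∀ s ∈ Icc t T, f s ≤ g s + K) (heq : EqOn f g (Ioc (t + 1) T)) :
    ∫ s in t..T, f s ≤ (∫ s in t..T, g s) + K := by
  set m := min (t + 1) T
  have htm : t ≤ m := le_min (by linarith) htT
  have hmT : m ≤ T := min_le_right _ _
  have hhead : uIcc t m ⊆ uIcc t T := uIcc_subset_uIcc_left (by simp [uIcc_of_le htT, htm, hmT])
  have htail : uIcc m T ⊆ uIcc t T := uIcc_subset_uIcc_right (by simp [uIcc_of_le htT, htm, hmT])
  rw [← intervalIntegral.integral_add_adjacent_intervals (hf.mono_set hhead) (hf.mono_set htail),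
    ← intervalIntegral.integral_add_adjacent_intervals (hg.mono_set hhead) (hg.mono_set htail)]
  have htail_eq : ∫ s in m..T, f s = ∫ s in m..T, g s := by
    refine intervalIntegral.integral_congr_ae (ae_of_all _ fun s hs => heq ?_)
    rw [uIoc_of_le hmT] at hs
    exact ⟨not_le.1 fun h => hs.1.not_ge (le_min h hs.2), hs.2⟩
  have hhead_le : ∫ s in t..m, f s ≤ (∫ s in t..m, g s) + (m - t) * K := by
    have hg' := hg.mono_set hhead
    have := intervalIntegral.integral_mono_on htm (hf.mono_set hhead)
      (hg'.add intervalIntegrable_const) fun s hs => hle s ⟨hs.1, hs.2.trans hmT⟩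
    rwa [intervalIntegral.integral_add hg' intervalIntegrable_const,
      intervalIntegral.integral_const, smul_eq_mul] at this
  have hlen : (m - t) * K ≤ K :=
    mul_le_of_le_one_left hK (by linarith [min_le_left (t + 1) T])
  linarith

section SegmentPath

variable {E : Type*} [NormedAddCommGroup E] [NormedSpace ℝ E]

def segmentPath (x y : E) (t s : ℝ) : E :=
  AffineMap.lineMap x y (projIcc (0 : ℝ) 1 zero_le_one (s - t) : ℝ)

theorem lipschitzWith_segmentPath (x y : E) (t : ℝ) :
    LipschitzWith (nndist x y) (segmentPath x y t) := by
  have hclamp : LipschitzWith 1 fun s : ℝ => (projIcc (0 : ℝ) 1 zero_le_one (s - t) : ℝ) :=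
    (((LipschitzWith.subtype_val _).comp (LipschitzWith.projIcc zero_le_one)).comp
      (IsometryEquiv.subRight t).isometry.lipschitz).weaken (by simp)
  exact ((lipschitzWith_lineMap x y).comp hclamp).weaken (by simp)

@[simp]
theorem segmentPath_apply_self (x y : E) (t : ℝ) : segmentPath x y t t = x := by
  simp [segmentPath]

theorem segmentPath_of_le {x y : E} {t s : ℝ} (h : t + 1 ≤ s) : segmentPath x y t s = y := by
  simp [segmentPath, projIcc_of_right_le _ (show 1 ≤ s - t by linarith)]

theorem deriv_segmentPath_of_lt {x y : E} {t s : ℝ} (h : t + 1 < s) :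
    deriv (segmentPath x y t) s = 0 := by
  have hconst : segmentPath x y t =ᶠ[nhds s] fun _ => y :=
    Filter.eventually_of_mem (Ioi_mem_nhds h) fun s' hs' => segmentPath_of_le (le_of_lt hs')
  rw [hconst.deriv_eq, deriv_const]

theorem Convex.segmentPath_mem {S : Set E} (hS : Convex ℝ S) {x y : E} (hx : x ∈ S)
    (hy : y ∈ S) (t s : ℝ) : segmentPath x y t s ∈ S :=
  hS.lineMap_mem hx hy (projIcc (0 : ℝ) 1 zero_le_one (s - t)).2

end SegmentPath

section RunningCost

variable {n : ℕ} {L : Euc n → Euc n → ℝ} {c : ℝ → Euc n → ℝ} {C₁ C₂ C₃ C_F T : ℝ}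

def runningCost (L : Euc n → Euc n → ℝ) (c : ℝ → Euc n → ℝ) (ξ : ℝ → Euc n) (s : ℝ) : ℝ :=
  L (ξ s) (deriv ξ s) + c s (ξ s)

@[simp]
theorem runningCost_const (y : Euc n) (s : ℝ) :
    runningCost L c (fun _ => y) s = L y 0 + c s y := by
  simp [runningCost]

theorem intervalIntegrable_runningCost (hTon : IsStrictTonelli L C₁ C₂ C₃) (hC₁ : 0 < C₁)
    (hRev : ∀ x v : Euc n, L x v = L x (-v))
    (hcc : ContinuousOn (fun p : ℝ × Euc n => c p.1 p.2) (Icc 0 T ×ˢ univ))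
    (hcb : ∀ s ∈ Icc (0 : ℝ) T, ∀ x, |c s x| ≤ C_F) {ξ : ℝ → Euc n} {K : ℝ≥0}
    (hξ : LipschitzWith K ξ) {a b : ℝ} (ha : 0 ≤ a) (hab : a ≤ b) (hb : b ≤ T) :
    IntervalIntegrable (runningCost L c ξ) volume a b := by
  have hsub : Ι a b ⊆ Icc 0 T := by
    rw [uIoc_of_le hab]
    exact Ioc_subset_Icc_self.trans (Icc_subset_Icc ha hb)
  have hLξ : Measurable fun s => L (ξ s) (deriv ξ s) :=
    hTon.1.continuous.measurable.comp (hξ.continuous.measurable.prodMk (measurable_deriv ξ))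
  have hcξ : ContinuousOn (fun s => c s (ξ s)) (Icc 0 T) :=
    hcc.comp (continuous_id.prodMk hξ.continuous).continuousOn fun s hs => ⟨hs, mem_univ _⟩
  refine intervalIntegrable_const.mono_fun' (g := fun _ => C₃ + C₁ * K ^ 2 / 2 + C_F)
    (hLξ.aestronglyMeasurable.add ((hcξ.aestronglyMeasurable measurableSet_Icc).mono_set hsub))
    ((ae_restrict_iff' measurableSet_uIoc).2 (ae_of_all _ fun s hs => ?_))
  have hv : C₁ * ‖deriv ξ s‖ ^ 2 ≤ C₁ * K ^ 2 := mul_le_mul_of_nonneg_left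
    (pow_le_pow_left₀ (norm_nonneg _) (norm_deriv_le_of_lipschitz hξ) 2) hC₁.le
  have hL := hTon.abs_apply_le hC₁ hRev (ξ s) (deriv ξ s)
  have hc := hcb s (hsub hs) (ξ s)
  simp only [Real.norm_eq_abs, runningCost]
  linarith [abs_add_le (L (ξ s) (deriv ξ s)) (c s (ξ s))]

theorem WellCondition.apply_le {K₀ : Set (Euc n)} {δ₀ : ℝ} {xT : Euc n}
    (hwell : WellCondition L c K₀ δ₀ T xT) (hδ₀ : 0 ≤ δ₀) {s : ℝ} (hs : s ∈ Icc 0 T)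
    (y : Euc n) : L xT 0 + c s xT ≤ L y 0 + c s y := by
  by_cases hy : y ∈ K₀
  · exact (hwell.2 s hs).1 y hy
  · linarith [(hwell.2 s hs).2 y hy]

theorem WellCondition.runningCost_add_le {K₀ : Set (Euc n)} {δ₀ : ℝ} {xT : Euc n}
    (hwell : WellCondition L c K₀ δ₀ T xT) (hδ₀ : 0 ≤ δ₀) (hTon : IsStrictTonelli L C₁ C₂ C₃)
    (hRev : ∀ x v : Euc n, L x v = L x (-v)) {s : ℝ} (hs : s ∈ Icc 0 T) (ξ : ℝ → Euc n) :
    runningCost L c (fun _ => xT) s + 1 / C₁ * ‖deriv ξ s‖ ^ 2 / 2 ≤ runningCost L c ξ s := by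
  rw [runningCost_const, runningCost]
  linarith [hwell.apply_le hδ₀ hs (ξ s), hTon.le_apply hRev (ξ s) (deriv ξ s)]

theorem IsStrictTonelli.runningCost_le (hTon : IsStrictTonelli L C₁ C₂ C₃)
    (hRev : ∀ x v : Euc n, L x v = L x (-v)) (hcb : ∀ s ∈ Icc (0 : ℝ) T, ∀ x, |c s x| ≤ C_F)
    {s : ℝ} (hs : s ∈ Icc 0 T) (ξ : ℝ → Euc n) (y : Euc n) :
    runningCost L c ξ s ≤
      runningCost L c (fun _ => y) s + 2 * (C₃ + C_F) + C₁ * ‖deriv ξ s‖ ^ 2 / 2 := by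
  rw [runningCost_const, runningCost]
  have h₁ := abs_le.1 (hTon.abs_apply_zero_le (ξ s))
  have h₂ := abs_le.1 (hTon.abs_apply_zero_le y)
  have h₃ := abs_le.1 (hcb s hs (ξ s))
  have h₄ := abs_le.1 (hcb s hs y)
  linarith [hTon.apply_le hRev (ξ s) (deriv ξ s)]

end RunningCost

theorem LipschitzWith.intervalIntegrable_norm_deriv_sq {E : Type*} [NormedAddCommGroup E]
    [NormedSpace ℝ E] [CompleteSpace E] [MeasurableSpace E] [BorelSpace E] {ξ : ℝ → E}
    {K : ℝ≥0} (hξ : LipschitzWith K ξ) (a b : ℝ) :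
    IntervalIntegrable (fun s => ‖deriv ξ s‖ ^ 2) volume a b :=
  intervalIntegrable_const.mono_fun' (g := fun _ => (K : ℝ) ^ 2)
    ((measurable_deriv ξ).norm.pow_const 2).aestronglyMeasurable
    (ae_of_all _ fun s => by
      simpa using pow_le_pow_left₀ (norm_nonneg _) (norm_deriv_le_of_lipschitz hξ) 2)

section Energy

variable {n : ℕ} {L : Euc n → Euc n → ℝ} {c : ℝ → Euc n → ℝ} {uf : Euc n → ℝ}
  {C₁ C₂ C₃ C_F T : ℝ}

theorem action_eq_integral_runningCost (t : ℝ) (ξ : ℝ → Euc n) :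
    action L c uf t T ξ = (∫ s in t..T, runningCost L c ξ s) + uf (ξ T) :=
  rfl

theorem WellCondition.integral_runningCost_add_energy_le {K₀ : Set (Euc n)} {δ₀ : ℝ}
    {xT : Euc n} (hwell : WellCondition L c K₀ δ₀ T xT) (hδ₀ : 0 ≤ δ₀)
    (hTon : IsStrictTonelli L C₁ C₂ C₃) (hC₁ : 0 < C₁) (hRev : ∀ x v : Euc n, L x v = L x (-v))
    (hcc : ContinuousOn (fun p : ℝ × Euc n => c p.1 p.2) (Icc 0 T ×ˢ univ))
    (hcb : ∀ s ∈ Icc (0 : ℝ) T, ∀ x, |c s x| ≤ C_F) {ξ : ℝ → Euc n} {K : ℝ≥0}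
    (hξ : LipschitzWith K ξ) {t : ℝ} (ht : t ∈ Icc 0 T) :
    (∫ s in t..T, runningCost L c (fun _ => xT) s)
        + 1 / C₁ * (∫ s in t..T, ‖deriv ξ s‖ ^ 2) / 2 ≤ ∫ s in t..T, runningCost L c ξ s := by
  have hwellCost := intervalIntegrable_runningCost hTon hC₁ hRev hcc hcb
    (LipschitzWith.const xT) ht.1 ht.2 le_rfl
  have henergy := (hξ.intervalIntegrable_norm_deriv_sq t T).const_mul (1 / C₁) |>.div_const 2
  have := intervalIntegral.integral_mono_on ht.2 (hwellCost.add henergy)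
    (intervalIntegrable_runningCost hTon hC₁ hRev hcc hcb hξ ht.1 ht.2 le_rfl)
    fun s hs => hwell.runningCost_add_le hδ₀ hTon hRev ⟨ht.1.trans hs.1, hs.2⟩ ξ
  rwa [intervalIntegral.integral_add hwellCost henergy, intervalIntegral.integral_div,
    intervalIntegral.integral_const_mul] at this

theorem integral_runningCost_segmentPath_le (hTon : IsStrictTonelli L C₁ C₂ C₃) (hC₁ : 0 < C₁)
    (hRev : ∀ x v : Euc n, L x v = L x (-v))
    (hcc : ContinuousOn (fun p : ℝ × Euc n => c p.1 p.2) (Icc 0 T ×ˢ univ))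
    (hcb : ∀ s ∈ Icc (0 : ℝ) T, ∀ x, |c s x| ≤ C_F) (x y : Euc n) {t : ℝ} (ht : t ∈ Icc 0 T) :
    ∫ s in t..T, runningCost L c (segmentPath x y t) s ≤
      (∫ s in t..T, runningCost L c (fun _ => y) s)
        + (2 * (C₃ + C_F) + C₁ * dist x y ^ 2 / 2) := by
  have hK : 0 ≤ 2 * (C₃ + C_F) + C₁ * dist x y ^ 2 / 2 := by
    have hC₃ := (abs_nonneg (L y 0)).trans (hTon.abs_apply_zero_le y)
    have hCF := (abs_nonneg (c t y)).trans (hcb t ht y)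
    positivity
  refine intervalIntegral_le_add_of_eqOn_Ioc ht.2 hK
    (intervalIntegrable_runningCost hTon hC₁ hRev hcc hcb (lipschitzWith_segmentPath x y t)
      ht.1 ht.2 le_rfl)
    (intervalIntegrable_runningCost hTon hC₁ hRev hcc hcb (LipschitzWith.const y)
      ht.1 ht.2 le_rfl) (fun s hs => ?_) (fun s hs => ?_)
  · have hspeed : C₁ * ‖deriv (segmentPath x y t) s‖ ^ 2 ≤ C₁ * dist x y ^ 2 :=
      mul_le_mul_of_nonneg_left (pow_le_pow_left₀ (norm_nonneg _)
        (norm_deriv_le_of_lipschitz (lipschitzWith_segmentPath x y t)) 2) hC₁.le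
    linarith [hTon.runningCost_le hRev hcb ⟨ht.1.trans hs.1, hs.2⟩ (segmentPath x y t) y]
  · simp [runningCost, segmentPath_of_le hs.1.le, deriv_segmentPath_of_lt hs.1]

theorem IsMinimizer.energy_le {K₀ : Set (Euc n)} {δ₀ c₀ t : ℝ} {x xT : Euc n} {ξ : ℝ → Euc n}
    (hξ : IsMinimizer L c uf t T x ξ) (hwell : WellCondition L c K₀ δ₀ T xT) (hδ₀ : 0 ≤ δ₀)
    (hTon : IsStrictTonelli L C₁ C₂ C₃) (hC₁ : 0 < C₁) (hRev : ∀ x v : Euc n, L x v = L x (-v))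
    (hcc : ContinuousOn (fun p : ℝ × Euc n => c p.1 p.2) (Icc 0 T ×ˢ univ))
    (hcb : ∀ s ∈ Icc (0 : ℝ) T, ∀ x, |c s x| ≤ C_F) (hufge : ∀ y, -c₀ ≤ uf y)
    (ht : t ∈ Icc 0 T) :
    1 / C₁ * (∫ s in t..T, ‖deriv ξ s‖ ^ 2) / 2 ≤
      2 * (C₃ + C_F) + C₁ * dist x xT ^ 2 / 2 + uf (segmentPath x xT t T) + c₀ := by
  obtain ⟨⟨K, hK⟩, -, hmin⟩ := hξ
  have hcmp := hmin (segmentPath x xT t) ⟨_, lipschitzWith_segmentPath x xT t⟩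
    (segmentPath_apply_self x xT t)
  rw [action_eq_integral_runningCost, action_eq_integral_runningCost] at hcmp
  linarith [hwell.integral_runningCost_add_energy_le hδ₀ hTon hC₁ hRev hcc hcb hK ht,
    integral_runningCost_segmentPath_le hTon hC₁ hRev hcc hcb x xT ht, hufge (ξ T)]

end Energy

theorem stmt10_general (n : ℕ) (L : Euc n → Euc n → ℝ) (C₁ C₂ C₃ : ℝ)
    (hC₁ : 0 < C₁) (hC₃ : 0 < C₃)
    (hTon : IsStrictTonelli L C₁ C₂ C₃)
    (hRev : ∀ x v : Euc n, L x v = L x (-v))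
    (C_F : ℝ) (hCF : 0 ≤ C_F)
    (K₀ : Set (Euc n))
    (R₀ : ℝ) (hR₀ : 0 < R₀) (hK₀R₀ : K₀ ⊆ closedBall 0 R₀)
    (δ₀ : ℝ) (hδ₀ : 0 < δ₀)
    (uf : Euc n → ℝ) (Kf : ℝ≥0) (huf : LipschitzWith Kf uf)
    (c₀ : ℝ) (hufge : ∀ x, -c₀ ≤ uf x)
    (R : ℝ) (hR : R₀ ≤ R) :
    ∃ κ > (0 : ℝ), ∀ T : ℝ, 1 < T → ∀ c : ℝ → Euc n → ℝ,
      ContinuousOn (fun p : ℝ × Euc n => c p.1 p.2) (Set.Icc 0 T ×ˢ Set.univ) →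
      (∀ s ∈ Set.Icc (0 : ℝ) T, ∀ x, |c s x| ≤ C_F) →
      (∃ xT : Euc n, WellCondition L c K₀ δ₀ T xT) →
      ∀ t ∈ Set.Icc (0 : ℝ) T, ∀ x ∈ closedBall (0 : Euc n) R, ∀ ξ : ℝ → Euc n,
        IsMinimizer L c uf t T x ξ →
        (∫ s in t..(min (t + 1) T), ‖deriv ξ s‖ ^ 2) ≤ κ := by
  have hR0 : 0 ≤ R := hR₀.le.trans hR
  set M := 2 * (C₃ + C_F) + 2 * C₁ * R ^ 2 + Kf * R + (uf 0 + c₀)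
  refine ⟨2 * C₁ * M, mul_pos (by positivity) ?_, ?_⟩
  · have : 0 ≤ 2 * C₁ * R ^ 2 + Kf * R := by positivity
    linarith [hufge 0]
  rintro T - c hcc hcb ⟨xT, hwell⟩ t ht x hx ξ hξ
  obtain ⟨K, hK⟩ := hξ.1
  have hxT : xT ∈ closedBall (0 : Euc n) R := closedBall_subset_closedBall hR (hK₀R₀ hwell.1)
  have hdist : C₁ * dist x xT ^ 2 / 2 ≤ 2 * C₁ * R ^ 2 := by
    have hsq : dist x xT ^ 2 ≤ (2 * R) ^ 2 := pow_le_pow_left₀ dist_nonneg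
      (by linarith [(dist_triangle_right x xT 0).trans (add_le_add hx hxT)]) 2
    linarith [mul_le_mul_of_nonneg_left hsq hC₁.le]
  have huf_end : uf (segmentPath x xT t T) ≤ uf 0 + Kf * R :=
    (huf.le_add_mul _ 0).trans
      (by gcongr; exact (convex_closedBall 0 R).segmentPath_mem hx hxT t T)
  have henergy := hξ.energy_le hwell hδ₀.le hTon hC₁ hRev hcc hcb hufge ht
  have hunit : (∫ s in t..(min (t + 1) T), ‖deriv ξ s‖ ^ 2) ≤ ∫ s in t..T, ‖deriv ξ s‖ ^ 2 :=
    intervalIntegral.integral_mono_interval le_rfl (le_min (by linarith) ht.2) (min_le_right _ _)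
      (ae_of_all _ fun s => by positivity)
      (hK.intervalIntegrable_norm_deriv_sq t T)
  have hscale : ∫ s in t..T, ‖deriv ξ s‖ ^ 2 =
      2 * C₁ * (1 / C₁ * (∫ s in t..T, ‖deriv ξ s‖ ^ 2) / 2) := by
    field_simp
  rw [hscale] at hunit
  exact hunit.trans (mul_le_mul_of_nonneg_left (by linarith) (by positivity))

/-- energy estimate on unit time intervals: in the time-dependent
variational setting, for every `R ≥ R₀` there is `κ(R) > 0`, independent of the horizon
`T > 1` and of the coupling `c` (with `|c| ≤ C_F` and satisfying the uniform well
condition), such that every minimizer `ξ*` from `(t,x)` with `t ∈ [0,T]`, `x ∈ B̄_R`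
satisfies `∫_t^{min(t+1,T)} |ξ*'(s)|² ds ≤ κ(R)`. -/
theorem stmt10 (n : ℕ) (hn : 1 ≤ n) (L : Euc n → Euc n → ℝ) (C₁ C₂ C₃ : ℝ)
    (hC₁ : 0 < C₁) (hC₂ : 0 < C₂) (hC₃ : 0 < C₃)
    (hTon : IsStrictTonelli L C₁ C₂ C₃)
    (hRev : ∀ x v : Euc n, L x v = L x (-v))
    (C_F : ℝ) (hCF : 0 ≤ C_F)
    (K₀ : Set (Euc n)) (hK₀c : IsCompact K₀) (hK₀ne : K₀.Nonempty)
    (R₀ : ℝ) (hR₀ : 0 < R₀) (hK₀R₀ : K₀ ⊆ closedBall 0 R₀)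
    (δ₀ : ℝ) (hδ₀ : 0 < δ₀)
    (uf : Euc n → ℝ) (Kf : ℝ≥0) (huf : LipschitzWith Kf uf)
    (c₀ : ℝ) (hc₀ : 0 ≤ c₀) (hufge : ∀ x, -c₀ ≤ uf x)
    (R : ℝ) (hR : R₀ ≤ R) :
    ∃ κ > (0 : ℝ), ∀ T : ℝ, 1 < T → ∀ c : ℝ → Euc n → ℝ,
      ContinuousOn (fun p : ℝ × Euc n => c p.1 p.2) (Set.Icc 0 T ×ˢ Set.univ) →
      (∀ s ∈ Set.Icc (0 : ℝ) T, ∀ x, |c s x| ≤ C_F) →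
      (∃ xT : Euc n, WellCondition L c K₀ δ₀ T xT) →
      ∀ t ∈ Set.Icc (0 : ℝ) T, ∀ x ∈ closedBall (0 : Euc n) R, ∀ ξ : ℝ → Euc n,
        IsMinimizer L c uf t T x ξ →
        (∫ s in t..(min (t + 1) T), ‖deriv ξ s‖ ^ 2) ≤ κ :=
  stmt10_general n L C₁ C₂ C₃ hC₁ hC₃ hTon hRev C_F hCF K₀ R₀ hR₀ hK₀R₀ δ₀ hδ₀ uf Kf huf c₀ hufge R
    hR
end
end
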